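/- Let d ≥ 1 and let U be a nonempty connected open subset of ℂ^d. Suppose (f_j)_{j∈ℕ} is a sequence of holomorphic functions U → ℂ such that for every z ∈ U the family (|f_j(z)|²)_{j∈ℕ} is summable, and such that the ℂ-linear span of {f_j : j ∈ ℕ} in the space of functions U → ℂ is infinite-dimensional. Then there do not exist n ≥ 1, a positive integer α, and holomorphic functions h₁, …, h_n : U → ℂ with (1 + Σ_{i=1}^n |h_i(z)|²)^α = 1 + ∑'_{j∈ℕ} |f_j(z)|² for all z ∈ U. -/

import Mathlib

/-!
Expanding the power, `(1 + ∑ |h_i|²)^α = ∑_φ |g_φ|²` for finitely many holomorphic products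
`g_φ`, so with `F = (1, f₀, f₁, …)` we get `∑_j |F_j(z)|² = ∑_φ |g_φ(z)|²` on `U`. Both sides
polarize: `∑_j F_j(z) conj F_j(w)` is holomorphic in `z` and antiholomorphic in `w`, and so is
`∑_φ g_φ(z) conj g_φ(w)`; agreeing on the diagonal, the two kernels agree near it. Hence the
vectors `(F_j(w))_j ∈ ℓ²` and `(g_φ(w))_φ ∈ ℂ^N` have the same Gram matrix, so every coordinate
functional of the former is a functional of the latter: each `F_j` is a linear combination of the
`g_φ` near a point, hence on `U` by the identity theorem, and the span of the `f_j` is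
finite-dimensional.
-/

open Complex Filter Metric Set Topology
open scoped InnerProductSpace ComplexConjugate

theorem eqOn_zero_of_forall_ofReal {χ : ℂ → ℂ} {c r : ℝ}
    (hχ : DifferentiableOn ℂ χ (ball (c : ℂ) r))
    (hreal : ∀ x : ℝ, (x : ℂ) ∈ ball (c : ℂ) r → χ x = 0) :
    EqOn χ 0 (ball (c : ℂ) r) := by
  intro z hz
  have hr : 0 < r := pos_of_mem_ball hz
  have hofReal : Tendsto ((↑) : ℝ → ℂ) (𝓝[≠] c) (𝓝[≠] (c : ℂ)) :=
    tendsto_nhdsWithin_of_tendsto_nhds_of_eventually_within _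
      ((continuous_ofReal.tendsto c).mono_left nhdsWithin_le_nhds)
      (eventually_nhdsWithin_of_forall fun x hx => by simpa using hx)
  have hfreq : ∃ᶠ w in 𝓝[≠] (c : ℂ), χ w = 0 := by
    refine hofReal.frequently (Eventually.frequently ?_)
    filter_upwards [nhdsWithin_le_nhds (continuous_ofReal.continuousAt.preimage_mem_nhds
      (ball_mem_nhds (c : ℂ) hr))] with x hx using hreal x hx
  exact (hχ.analyticOnNhd isOpen_ball).eqOn_zero_of_preconnected_of_frequently_eq_zero
    (convex_ball _ _).isPreconnected (mem_ball_self hr) hfreq hz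

theorem eqOn_pi_zero_of_forall_im_eq_zero {ι : Type*} [Fintype ι] [DecidableEq ι]
    {c : ι → ℝ} {r : ℝ} {Θ : (ι → ℂ) → ℂ}
    (hΘ : ∀ x ∈ univ.pi (fun u => ball (c u : ℂ) r), ∀ t,
      DifferentiableOn ℂ (fun w => Θ (Function.update x t w)) (ball (c t : ℂ) r))
    (hreal : ∀ x ∈ univ.pi (fun u => ball (c u : ℂ) r), (∀ u, (x u).im = 0) → Θ x = 0) :
    EqOn Θ 0 (univ.pi fun u => ball (c u : ℂ) r) := by
  suffices H : ∀ S : Finset ι, ∀ x ∈ univ.pi (fun u => ball (c u : ℂ) r),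
      (∀ u ∉ S, (x u).im = 0) → Θ x = 0 from
    fun x hx => H Finset.univ x hx fun u hu => absurd (Finset.mem_univ u) hu
  intro S
  induction S using Finset.induction with
  | empty => exact fun x hx hre => hreal x hx fun u => hre u (Finset.notMem_empty u)
  | @insert a S _ ih =>
    intro x hx hre
    have hslice : EqOn (fun w => Θ (Function.update x a w)) 0 (ball (c a : ℂ) r) := by
      refine eqOn_zero_of_forall_ofReal (hΘ x hx a) fun ρ hρ => ih _ ?_ fun u hu => ?_
      · exact (update_mem_pi_iff_of_mem hx).2 fun _ => hρ
      · rcases eq_or_ne u a with rfl | hua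
        · simp
        · rw [Function.update_of_ne hua]
          exact hre u (by simp [hua, hu])
    simpa using hslice (hx a (mem_univ a))

theorem norm_tsum_mul_sub_sum_range_le {a b : ℕ → ℂ} {A B : ℝ}
    (ha : HasSum (fun j => ‖a j‖ ^ 2) A) (hb : HasSum (fun j => ‖b j‖ ^ 2) B) (M : ℕ) :
    ‖∑' j, a j * b j - ∑ j ∈ Finset.range M, a j * b j‖ ≤
      ((A - ∑ j ∈ Finset.range M, ‖a j‖ ^ 2) + (B - ∑ j ∈ Finset.range M, ‖b j‖ ^ 2)) / 2 := by
  have hbound (j : ℕ) : ‖a j * b j‖ ≤ (‖a j‖ ^ 2 + ‖b j‖ ^ 2) / 2 := by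
    rw [norm_mul]
    nlinarith [sq_nonneg (‖a j‖ - ‖b j‖)]
  have hab : HasSum (fun j => (‖a j‖ ^ 2 + ‖b j‖ ^ 2) / 2) ((A + B) / 2) :=
    (ha.add hb).div_const 2
  rw [← (Summable.of_norm_bounded hab.summable hbound).sum_add_tsum_nat_add M,
    add_sub_cancel_left]
  refine (tsum_of_norm_bounded ((hasSum_nat_add_iff' M).2 hab) fun j => hbound (j + M)).trans_eq ?_
  rw [← Finset.sum_div, Finset.sum_add_distrib]
  ring

theorem differentiableOn_tsum_mul {B : Set ℂ} (hB : IsOpen B) {a b : ℕ → ℂ → ℂ}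
    (ha : ∀ j, DifferentiableOn ℂ (a j) B) (hb : ∀ j, DifferentiableOn ℂ (b j) B)
    {A A' : ℂ → ℝ}
    (hA : TendstoUniformlyOn (fun M w => ∑ j ∈ Finset.range M, ‖a j w‖ ^ 2) A atTop B)
    (hA' : TendstoUniformlyOn (fun M w => ∑ j ∈ Finset.range M, ‖b j w‖ ^ 2) A' atTop B) :
    DifferentiableOn ℂ (fun w => ∑' j, a j w * b j w) B := by
  have hsa : ∀ w ∈ B, HasSum (fun j => ‖a j w‖ ^ 2) (A w) := fun w hw =>
    (hasSum_iff_tendsto_nat_of_nonneg (fun j => by positivity) _).2 (hA.tendsto_at hw)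
  have hsb : ∀ w ∈ B, HasSum (fun j => ‖b j w‖ ^ 2) (A' w) := fun w hw =>
    (hasSum_iff_tendsto_nat_of_nonneg (fun j => by positivity) _).2 (hA'.tendsto_at hw)
  have hunif : TendstoUniformlyOn (fun M w => ∑ j ∈ Finset.range M, a j w * b j w)
      (fun w => ∑' j, a j w * b j w) atTop B := by
    refine Metric.tendstoUniformlyOn_iff.2 fun ε hε => ?_
    filter_upwards [Metric.tendstoUniformlyOn_iff.1 hA ε hε,
      Metric.tendstoUniformlyOn_iff.1 hA' ε hε] with M hM hM' w hw
    have htail := norm_tsum_mul_sub_sum_range_le (hsa w hw) (hsb w hw) M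
    have ha_lt := hM w hw
    have hb_lt := hM' w hw
    rw [Real.dist_eq, abs_lt] at ha_lt hb_lt
    rw [dist_eq_norm]
    linarith
  exact hunif.tendstoLocallyUniformlyOn.differentiableOn
    (Eventually.of_forall fun M => DifferentiableOn.fun_sum fun j _ => (ha j).mul (hb j)) hB

theorem tendstoUniformlyOn_sum_range_sq_norm {X : Type*} [TopologicalSpace X] {C : Set X}
    (hC : IsCompact C) {F : ℕ → X → ℂ} (hF : ∀ j, ContinuousOn (F j) C) {Q : X → ℝ}
    (hQ : ContinuousOn Q C) (hsum : ∀ z ∈ C, HasSum (fun j => ‖F j z‖ ^ 2) (Q z)) :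
    TendstoUniformlyOn (fun M z => ∑ j ∈ Finset.range M, ‖F j z‖ ^ 2) Q atTop C :=
  Monotone.tendstoUniformlyOn_of_forall_tendsto hC
    (fun M => continuousOn_finsetSum _ fun j _ => ((hF j).norm).pow 2)
    (fun z _ => monotone_nat_of_le_succ fun M => by
      rw [Finset.sum_range_succ]
      exact le_add_of_nonneg_right (by positivity))
    hQ fun z hz => (hsum z hz).tendsto_sum_nat

theorem exists_inner_eq_of_inner_eq {E F S : Type*} [NormedAddCommGroup E]
    [InnerProductSpace ℂ E] [NormedAddCommGroup F] [InnerProductSpace ℂ F] [FiniteDimensional ℂ F]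
    {v : S → E} {v' : S → F} (hv : ∀ s t, ⟪v s, v t⟫_ℂ = ⟪v' s, v' t⟫_ℂ) (u : E) :
    ∃ c : F, ∀ s, ⟪u, v s⟫_ℂ = ⟪c, v' s⟫_ℂ := by
  set A := Finsupp.linearCombination ℂ v
  set A' := Finsupp.linearCombination ℂ v'
  have hnorm (a : S →₀ ℂ) : ‖A a‖ = ‖A' a‖ := by
    have : ⟪A a, A a⟫_ℂ = ⟪A' a, A' a⟫_ℂ := by
      simp only [A, A', Finsupp.linearCombination_apply, Finsupp.sum_inner, Finsupp.inner_sum,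
        inner_smul_left, inner_smul_right, hv]
    rw [@norm_eq_sqrt_re_inner ℂ, @norm_eq_sqrt_re_inner ℂ, this]
  -- `⟪u, A ·⟫` kills `ker A' = ker A`, so it is a combination of the coordinates of `A'`.
  set b := stdOrthonormalBasis ℂ F
  have hker : ⨅ k, LinearMap.ker ((innerₛₗ ℂ (b k)).comp A') ≤
      LinearMap.ker ((innerₛₗ ℂ u).comp A) := by
    intro a ha
    simp only [Submodule.mem_iInf, LinearMap.mem_ker, LinearMap.comp_apply,
      innerₛₗ_apply_apply] at ha ⊢
    have hA' : A' a = 0 := by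
      rw [← b.sum_repr' (A' a)]
      simp [ha]
    have hA : A a = 0 := norm_eq_zero.1 (by rw [hnorm, hA', norm_zero])
    rw [hA, inner_zero_right]
  obtain ⟨μ, hμ⟩ :=
    (Submodule.mem_span_range_iff_exists_fun ℂ).1 (mem_span_of_iInf_ker_le_ker hker)
  refine ⟨∑ k, conj (μ k) • b k, fun s => ?_⟩
  have := LinearMap.congr_fun hμ (Finsupp.single s 1)
  simp only [LinearMap.sum_apply, LinearMap.smul_apply, LinearMap.comp_apply,
    innerₛₗ_apply_apply, A, A', Finsupp.linearCombination_single, one_smul] at this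
  simp [← this, mul_comm]

theorem exists_eq_sum_of_tsum_mul_conj_eq {X ι : Type*} [Fintype ι] {S : Set X}
    {F : ℕ → X → ℂ} {g : ι → X → ℂ} (hF : ∀ z ∈ S, Summable fun j => ‖F j z‖ ^ 2)
    (hK : ∀ z ∈ S, ∀ w ∈ S, ∑' j, F j z * conj (F j w) = ∑ i, g i z * conj (g i w)) (j : ℕ) :
    ∃ c : ι → ℂ, ∀ w ∈ S, F j w = ∑ i, c i * g i w := by
  let v : S → lp (fun _ : ℕ => ℂ) 2 := fun w =>
    ⟨fun j => F j w, memℓp_gen (by simpa using hF w w.2)⟩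
  let v' : S → EuclideanSpace ℂ ι := fun w => WithLp.toLp 2 fun i => g i w
  have hv (s t : S) : ⟪v s, v t⟫_ℂ = ⟪v' s, v' t⟫_ℂ := by
    simp only [lp.inner_eq_tsum, PiLp.inner_apply, RCLike.inner_apply, v, v']
    simpa only [mul_comm] using hK t t.2 s s.2
  obtain ⟨c, hc⟩ := exists_inner_eq_of_inner_eq hv (lp.single 2 j 1)
  refine ⟨fun i => conj (c i), fun w hw => ?_⟩
  simpa [lp.inner_single_left, PiLp.inner_apply, v, v', mul_comm] using hc ⟨w, hw⟩

noncomputable section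

variable {σ : Type*}

/-- Holomorphic in `ζ` as well as in `z`, since `conj ∘ F j ∘ conj` is holomorphic. -/
def polarKernel {ι : Type*} (F : ι → (σ → ℂ) → ℂ) (z ζ : σ → ℂ) : ℂ :=
  ∑' j, F j z * conj (F j (star ζ))

theorem polarKernel_star_right {ι : Type*} (F : ι → (σ → ℂ) → ℂ) (z : σ → ℂ) :
    polarKernel F z (star z) = ((∑' j, ‖F j z‖ ^ 2 : ℝ) : ℂ) := by
  simp only [polarKernel, star_star, mul_conj, normSq_eq_norm_sq, ofReal_tsum]

/-- The coordinates `x = (p, q)` with `z = mixCoord I x = p + i q` and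
`ζ = mixCoord (-I) x = p - i q`: the real `x` are exactly the points with `ζ = conj z`. -/
def mixCoord (ε : ℂ) (x : σ ⊕ σ → ℂ) : σ → ℂ := fun s => x (.inl s) + ε * x (.inr s)

def unmixCoord (z ζ : σ → ℂ) : σ ⊕ σ → ℂ :=
  Sum.elim (fun s => (z s + ζ s) / 2) (fun s => (z s - ζ s) / (2 * I))

theorem mixCoord_I_unmixCoord (z ζ : σ → ℂ) : mixCoord I (unmixCoord z ζ) = z := by
  ext s
  simp only [mixCoord, unmixCoord, Sum.elim_inl, Sum.elim_inr]
  field_simp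
  ring

theorem mixCoord_neg_I_unmixCoord (z ζ : σ → ℂ) : mixCoord (-I) (unmixCoord z ζ) = ζ := by
  ext s
  simp only [mixCoord, unmixCoord, Sum.elim_inl, Sum.elim_inr]
  field_simp
  ring

theorem star_mixCoord (ε : ℂ) (x : σ ⊕ σ → ℂ) :
    star (mixCoord ε x) = mixCoord (conj ε) (star x) := by
  ext s
  simp [mixCoord]

theorem unmixCoord_star_self (z : σ → ℂ) :
    unmixCoord z (star z) =
      fun u => ((Sum.elim (fun s => (z s).re) (fun s => (z s).im) u : ℝ) : ℂ) := by
  ext (s | s)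
  · simp [unmixCoord, add_conj]
  · simp only [unmixCoord, Sum.elim_inr, Pi.star_apply, Complex.star_def, sub_conj]
    push_cast
    field_simp

theorem star_unmixCoord_star_self (z : σ → ℂ) :
    star (unmixCoord z (star z)) = unmixCoord z (star z) := by
  rw [unmixCoord_star_self]
  ext u
  simp

theorem differentiable_mixCoord [Fintype σ] (ε : ℂ) :
    Differentiable ℂ (mixCoord (σ := σ) ε) := by
  unfold mixCoord
  fun_prop

theorem dist_mixCoord_le [Fintype σ] {ε : ℂ} (hε : ‖ε‖ = 1) (x y : σ ⊕ σ → ℂ) :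
    dist (mixCoord ε x) (mixCoord ε y) ≤ 2 * dist x y := by
  refine dist_pi_le_iff (by positivity) |>.2 fun s => ?_
  have h₁ := dist_le_pi_dist x y (.inl s)
  have h₂ := dist_le_pi_dist x y (.inr s)
  calc dist (mixCoord ε x s) (mixCoord ε y s)
      ≤ dist (x (.inl s)) (y (.inl s)) + dist (ε * x (.inr s)) (ε * y (.inr s)) :=
        dist_add_add_le _ _ _ _
    _ ≤ 2 * dist x y := by
        rw [dist_eq_norm (ε * _), ← mul_sub, norm_mul, hε, one_mul, ← dist_eq_norm]
        linarith

theorem dist_unmixCoord_lt [Fintype σ] {z z' ζ ζ' : σ → ℂ} {r : ℝ} (hz : dist z z' < r)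
    (hζ : dist ζ ζ' < r) : dist (unmixCoord z ζ) (unmixCoord z' ζ') < r := by
  have hr : 0 < r := dist_nonneg.trans_lt hz
  refine dist_pi_lt_iff hr |>.2 fun u => ?_
  have hzs (s : σ) : ‖z s - z' s‖ < r := by
    rw [← dist_eq_norm]
    exact (dist_le_pi_dist z z' s).trans_lt hz
  have hζs (s : σ) : ‖ζ s - ζ' s‖ < r := by
    rw [← dist_eq_norm]
    exact (dist_le_pi_dist ζ ζ' s).trans_lt hζ
  rw [dist_eq_norm]
  cases u with
  | inl s =>
    calc ‖unmixCoord z ζ (.inl s) - unmixCoord z' ζ' (.inl s)‖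
        = ‖(z s - z' s) + (ζ s - ζ' s)‖ / 2 := by
          simp only [unmixCoord, Sum.elim_inl, ← sub_div, norm_div]
          norm_num
          ring_nf
      _ < r := by linarith [norm_add_le (z s - z' s) (ζ s - ζ' s), hzs s, hζs s]
  | inr s =>
    calc ‖unmixCoord z ζ (.inr s) - unmixCoord z' ζ' (.inr s)‖
        = ‖(z s - z' s) - (ζ s - ζ' s)‖ / 2 := by
          simp only [unmixCoord, Sum.elim_inr, ← sub_div, norm_div, norm_mul, norm_I]
          norm_num
          ring_nf
      _ < r := by linarith [norm_sub_le (z s - z' s) (ζ s - ζ' s), hzs s, hζs s]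

theorem mixCoord_mem_closedBall [Fintype σ] {z₀ : σ → ℂ} {r : ℝ} {x : σ ⊕ σ → ℂ}
    (hx : x ∈ ball (unmixCoord z₀ (star z₀)) r) :
    mixCoord I x ∈ closedBall z₀ (2 * r) ∧ star (mixCoord (-I) x) ∈ closedBall z₀ (2 * r) := by
  rw [mem_ball] at hx
  have hstar : dist (star x) (unmixCoord z₀ (star z₀)) < r := by
    rwa [← star_unmixCoord_star_self, dist_star_star]
  have hbound (y) (hy : dist y (unmixCoord z₀ (star z₀)) < r) :
      mixCoord I y ∈ closedBall z₀ (2 * r) :=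
    calc dist (mixCoord I y) z₀
        = dist (mixCoord I y) (mixCoord I (unmixCoord z₀ (star z₀))) := by
          rw [mixCoord_I_unmixCoord]
      _ ≤ 2 * dist y (unmixCoord z₀ (star z₀)) := dist_mixCoord_le norm_I _ _
      _ ≤ 2 * r := by linarith
  rw [star_mixCoord, map_neg, conj_I, neg_neg]
  exact ⟨hbound x hx, hbound _ hstar⟩

theorem DifferentiableAt.conj_comp_star [Fintype σ] {f : (σ → ℂ) → ℂ} {Z : ℂ → σ → ℂ}
    {w : ℂ} (hf : DifferentiableAt ℂ f (star (Z w))) (hZ : DifferentiableAt ℂ Z w) :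
    DifferentiableAt ℂ (fun w => conj (f (star (Z w)))) w := by
  have := hf.star_star
  rw [_root_.star_star] at this
  exact this.comp w hZ

theorem differentiableOn_polarKernel_comp [Fintype σ] {F : ℕ → (σ → ℂ) → ℂ} {C : Set (σ → ℂ)}
    (hF : ∀ j, ∀ z ∈ C, DifferentiableAt ℂ (F j) z) {Q : (σ → ℂ) → ℝ}
    (hQ : TendstoUniformlyOn (fun M z => ∑ j ∈ Finset.range M, ‖F j z‖ ^ 2) Q atTop C)
    {B : Set ℂ} (hB : IsOpen B) {Z Z' : ℂ → σ → ℂ} (hZ : Differentiable ℂ Z)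
    (hZ' : Differentiable ℂ Z') (hZC : MapsTo Z B C) (hZ'C : MapsTo (star ∘ Z') B C) :
    DifferentiableOn ℂ (fun w => polarKernel F (Z w) (Z' w)) B := by
  have hZ'Q : TendstoUniformlyOn
      (fun M w => ∑ j ∈ Finset.range M, ‖conj (F j (star (Z' w)))‖ ^ 2)
      (Q ∘ star ∘ Z') atTop B := by
    simpa only [RCLike.norm_conj, Function.comp_def] using
      (hQ.comp (star ∘ Z')).mono hZ'C.subset_preimage
  exact differentiableOn_tsum_mul hB
    (fun j w hw => ((hF j _ (hZC hw)).comp w (hZ w)).differentiableWithinAt)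
    (fun j w hw => ((hF j _ (hZ'C hw)).conj_comp_star (hZ' w)).differentiableWithinAt)
    ((hQ.comp Z).mono hZC.subset_preimage) hZ'Q

theorem differentiableOn_polarKernel_comp_of_fintype [Fintype σ] {ι : Type*} [Fintype ι]
    {g : ι → (σ → ℂ) → ℂ} {C : Set (σ → ℂ)} (hg : ∀ i, ∀ z ∈ C, DifferentiableAt ℂ (g i) z)
    {B : Set ℂ} {Z Z' : ℂ → σ → ℂ} (hZ : Differentiable ℂ Z)
    (hZ' : Differentiable ℂ Z') (hZC : MapsTo Z B C) (hZ'C : MapsTo (star ∘ Z') B C) :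
    DifferentiableOn ℂ (fun w => polarKernel g (Z w) (Z' w)) B := by
  simp only [polarKernel, tsum_fintype]
  exact DifferentiableOn.fun_sum fun i _ w hw =>
    (((hg i _ (hZC hw)).comp w (hZ w)).mul
      ((hg i _ (hZ'C hw)).conj_comp_star (hZ' w))).differentiableWithinAt

theorem polarKernel_eq_of_hasSum [Fintype σ] {U : Set (σ → ℂ)} {F : ℕ → (σ → ℂ) → ℂ}
    {ι : Type*} [Fintype ι] {g : ι → (σ → ℂ) → ℂ} (hF : ∀ j, AnalyticOnNhd ℂ (F j) U)
    (hg : ∀ i, AnalyticOnNhd ℂ (g i) U)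
    (hsum : ∀ z ∈ U, HasSum (fun j => ‖F j z‖ ^ 2) (∑ i, ‖g i z‖ ^ 2))
    {z₀ : σ → ℂ} {r : ℝ} (hU : closedBall z₀ (2 * r) ⊆ U) {z w : σ → ℂ}
    (hz : z ∈ ball z₀ r) (hw : w ∈ ball z₀ r) :
    polarKernel F z (star w) = polarKernel g z (star w) := by
  classical
  set c : σ ⊕ σ → ℝ := Sum.elim (fun s => (z₀ s).re) (fun s => (z₀ s).im)
  set D := univ.pi fun u => ball (c u : ℂ) r
  have hD : D = ball (unmixCoord z₀ (star z₀)) r := by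
    rw [unmixCoord_star_self, ball_pi _ (pos_of_mem_ball hz)]
  set Θ : (σ ⊕ σ → ℂ) → ℂ := fun x =>
    polarKernel F (mixCoord I x) (mixCoord (-I) x) - polarKernel g (mixCoord I x) (mixCoord (-I) x)
  have hQ := tendstoUniformlyOn_sum_range_sq_norm (Q := fun z => ∑ i, ‖g i z‖ ^ 2)
    (isCompact_closedBall z₀ (2 * r)) (fun j => (hF j).continuousOn.mono hU)
    (continuousOn_finsetSum _ fun i _ => ((hg i).continuousOn.mono hU).norm.pow 2)
    fun z hz => hsum z (hU hz)
  have hΘ : EqOn Θ 0 D := by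
    refine eqOn_pi_zero_of_forall_im_eq_zero (fun x hx t => ?_) fun x hx hx_real => ?_
    · have hmaps : MapsTo (Function.update x t) (ball (c t : ℂ) r) D := fun w hw =>
        (update_mem_pi_iff_of_mem hx).2 fun _ => hw
      have hZ (w) (hw : w ∈ ball (c t : ℂ) r) := mixCoord_mem_closedBall (hD ▸ hmaps hw)
      have hdiff (ε : ℂ) : Differentiable ℂ fun w => mixCoord ε (Function.update x t w) :=
        (differentiable_mixCoord ε).comp (f := Function.update x t) fun w =>
          (hasFDerivAt_update x w).differentiableAt
      exact (differentiableOn_polarKernel_comp (fun j z hz => (hF j z (hU hz)).differentiableAt)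
        hQ isOpen_ball (hdiff I) (hdiff (-I)) (fun w hw => (hZ w hw).1) fun w hw => (hZ w hw).2).sub
        (differentiableOn_polarKernel_comp_of_fintype
          (fun i z hz => (hg i z (hU hz)).differentiableAt) (hdiff I) (hdiff (-I))
          (fun w hw => (hZ w hw).1) fun w hw => (hZ w hw).2)
    · have hx_star : star x = x := funext fun u => conj_eq_iff_im.2 (hx_real u)
      have hmix : mixCoord (-I) x = star (mixCoord I x) := by
        rw [star_mixCoord, hx_star, conj_I]
      have hmem := hU (mixCoord_mem_closedBall (by rwa [← hD])).1
      simp only [Θ, hmix, polarKernel_star_right, (hsum _ hmem).tsum_eq, tsum_fintype, sub_self]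
  have hx : unmixCoord z (star w) ∈ D := by
    rw [hD]
    exact dist_unmixCoord_lt hz (by rwa [dist_star_star])
  simpa [Θ, sub_eq_zero, mixCoord_I_unmixCoord, mixCoord_neg_I_unmixCoord] using hΘ hx

theorem domRestrict_mem_span_of_hasSum_sq_norm [Fintype σ] {U : Set (σ → ℂ)} (hUo : IsOpen U)
    (hUc : IsConnected U) {F : ℕ → (σ → ℂ) → ℂ} {ι : Type*} [Fintype ι] {g : ι → (σ → ℂ) → ℂ}
    (hF : ∀ j, AnalyticOnNhd ℂ (F j) U) (hg : ∀ i, AnalyticOnNhd ℂ (g i) U)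
    (hsum : ∀ z ∈ U, HasSum (fun j => ‖F j z‖ ^ 2) (∑ i, ‖g i z‖ ^ 2)) (j : ℕ) :
    U.domRestrict (F j) ∈ Submodule.span ℂ (range fun i => U.domRestrict (g i)) := by
  obtain ⟨z₀, hz₀⟩ := hUc.nonempty
  obtain ⟨ε, hε, hεU⟩ := Metric.isOpen_iff.1 hUo z₀ hz₀
  have hU : closedBall z₀ (2 * (ε / 3)) ⊆ U := (closedBall_subset_ball (by linarith)).trans hεU
  have hball : ball z₀ (ε / 3) ⊆ U := ball_subset_closedBall.trans <|
    (closedBall_subset_closedBall (by linarith)).trans hU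
  obtain ⟨c, hc⟩ := exists_eq_sum_of_tsum_mul_conj_eq (S := ball z₀ (ε / 3))
    (fun z hz => (hsum z (hball hz)).summable)
    (fun z hz w hw => by simpa [polarKernel] using polarKernel_eq_of_hasSum hF hg hsum hU hz hw) j
  have hEqOn : EqOn (F j) (fun w => ∑ i, c i * g i w) U :=
    (hF j).eqOn_of_preconnected_of_eventuallyEq
      (Finset.analyticOnNhd_fun_sum _ fun i _ => analyticOnNhd_const.mul (hg i))
      hUc.isPreconnected hz₀ (eventually_of_mem (ball_mem_nhds z₀ (by positivity)) hc)
  have hrestrict : U.domRestrict (F j) = ∑ i, c i • U.domRestrict (g i) := by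
    ext w
    simp only [Finset.sum_apply, Pi.smul_apply, smul_eq_mul]
    exact hEqOn w.2
  rw [hrestrict]
  exact Submodule.sum_mem _ fun i _ => Submodule.smul_mem _ _ (Submodule.subset_span ⟨i, rfl⟩)

end

theorem sum_sq_norm_prod_eq_pow {K : Type*} [Fintype K] (k : K → ℂ) (α : ℕ) :
    ∑ φ : Fin α → K, ‖∏ t, k (φ t)‖ ^ 2 = (∑ i, ‖k i‖ ^ 2) ^ α := by
  simp only [norm_prod, ← Finset.prod_pow]
  rw [← Fintype.prod_sum (fun _ i => ‖k i‖ ^ 2), Finset.prod_const, Finset.card_univ,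
    Fintype.card_fin]

theorem stmt_11_general (d : ℕ)
    (U : Set (Fin d → ℂ)) (hUo : IsOpen U) (hUc : IsConnected U)
    (f : ℕ → (Fin d → ℂ) → ℂ) (hf : ∀ j, AnalyticOn ℂ (f j) U)
    (hsum : ∀ z ∈ U, Summable fun j => ‖f j z‖ ^ 2)
    (hinf : ¬ FiniteDimensional ℂ
      ↥(Submodule.span ℂ (Set.range fun j => U.restrict (f j)))) :
    ¬ ∃ (n : ℕ) (_ : 1 ≤ n) (α : ℕ) (_ : 0 < α) (h : Fin n → (Fin d → ℂ) → ℂ),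
        (∀ i, AnalyticOn ℂ (h i) U) ∧
        ∀ z ∈ U, (1 + ∑ i, ‖h i z‖ ^ 2) ^ α = 1 + ∑' j, ‖f j z‖ ^ 2 := by
  rintro ⟨n, -, α, -, h, hh, hEq⟩
  let k : Option (Fin n) → (Fin d → ℂ) → ℂ := fun o z => o.elim 1 (h · z)
  let g : (Fin α → Option (Fin n)) → (Fin d → ℂ) → ℂ := fun φ z => ∏ t, k (φ t) z
  let F : ℕ → (Fin d → ℂ) → ℂ := fun j => Nat.casesOn j 1 f
  have hk : ∀ o, AnalyticOnNhd ℂ (k o) U := by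
    rintro (_ | i)
    exacts [analyticOnNhd_const, hUo.analyticOn_iff_analyticOnNhd.1 (hh i)]
  have hF : ∀ j, AnalyticOnNhd ℂ (F j) U := by
    rintro (_ | j)
    exacts [analyticOnNhd_const, hUo.analyticOn_iff_analyticOnNhd.1 (hf j)]
  have hsumF (z) (hz : z ∈ U) : HasSum (fun j => ‖F j z‖ ^ 2) (∑ φ, ‖g φ z‖ ^ 2) := by
    have hk_sum : ∑ o, ‖k o z‖ ^ 2 = 1 + ∑ i, ‖h i z‖ ^ 2 := by simp [k, Fintype.sum_option]
    rw [sum_sq_norm_prod_eq_pow (fun o => k o z), hk_sum, hEq z hz, add_comm]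
    simpa [F] using (hasSum_nat_add_iff (f := fun j => ‖F j z‖ ^ 2) 1).1 (hsum z hz).hasSum
  have hspan : Submodule.span ℂ (range fun j => U.domRestrict (f j)) ≤
      Submodule.span ℂ (range fun φ => U.domRestrict (g φ)) :=
    Submodule.span_le.2 <| range_subset_iff.2 fun j =>
      domRestrict_mem_span_of_hasSum_sq_norm hUo hUc hF
        (fun φ => Finset.analyticOnNhd_fun_prod _ fun t _ => hk (φ t)) hsumF (j + 1)
  have := FiniteDimensional.span_of_finite ℂ (finite_range fun φ => U.domRestrict (g φ))
  exact hinf (Submodule.finiteDimensional_of_le hspan)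

/-- If `(f_j)` is a sequence of holomorphic functions on a nonempty
connected open `U ⊆ ℂ^d` with pointwise summable squared norms and infinite-dimensional
span, then `1 + ∑'_j |f_j|²` can never equal `(1 + Σ_{i=1}^n |h_i|²)^α` for holomorphic
`h_i` and a positive integer `α`. -/
theorem stmt_11 (d : ℕ) (hd : 1 ≤ d)
    (U : Set (Fin d → ℂ)) (hUo : IsOpen U) (hUc : IsConnected U)
    (f : ℕ → (Fin d → ℂ) → ℂ) (hf : ∀ j, AnalyticOn ℂ (f j) U)
    (hsum : ∀ z ∈ U, Summable fun j => ‖f j z‖ ^ 2)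
    (hinf : ¬ FiniteDimensional ℂ
      ↥(Submodule.span ℂ (Set.range fun j => U.restrict (f j)))) :
    ¬ ∃ (n : ℕ) (_ : 1 ≤ n) (α : ℕ) (_ : 0 < α) (h : Fin n → (Fin d → ℂ) → ℂ),
        (∀ i, AnalyticOn ℂ (h i) U) ∧
        ∀ z ∈ U, (1 + ∑ i, ‖h i z‖ ^ 2) ^ α = 1 + ∑' j, ‖f j z‖ ^ 2 :=
  stmt_11_general d U hUo hUc f hf hsum hinf
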